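/- arXiv:2010.01827 — 3 statements merged into one kernel-verified Lean document; each statement's English description precedes it below -/
import Mathlib

section
/- Let (G, X, s, r, u, i) be a groupoid order datum with G locally compact Hausdorff and X Hausdorff, and let H be a subset of G. Assume that for every G-order 𝔯 there exist open subsets V₁, V₂ of X with s(H) ⊆ V₁ ∪ V₂ and open subsets H₁, H₂ of G with H₁ ∪ H₂ ⊆ H and 𝔯 ∩ s⁻¹(Vᵢ) ∩ H ⊆ Hᵢ for i = 1, 2. Then H is open in G. -/
/-- A `G`-order for a groupoid order datum `(G, X, s, r, u, i)`: a subset `𝔯 ⊆ G` such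
that `u(s(𝔯)) ⊆ 𝔯`, `i(𝔯) = 𝔯`, and `𝔯 ∩ s⁻¹(Z)` is compact for every compact `Z ⊆ X`. -/
def IsGOrder {G X : Type*} [TopologicalSpace G] [TopologicalSpace X]
    (s : G → X) (u : X → G) (i : G → G) (𝔯 : Set G) : Prop :=
  u '' (s '' 𝔯) ⊆ 𝔯 ∧ i '' 𝔯 = 𝔯 ∧ ∀ Z : Set X, IsCompact Z → IsCompact (𝔯 ∩ s ⁻¹' Z)

/-- Let `(G, X, s, r, u, i)` be a groupoid order datum with `G` locally
compact Hausdorff and `X` Hausdorff, and let `H` be a subset of `G`. Assume that for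
every `G`-order `𝔯` there exist open `V₁, V₂ ⊆ X` with `s(H) ⊆ V₁ ∪ V₂` and open
`H₁, H₂ ⊆ G` with `H₁ ∪ H₂ ⊆ H` and `𝔯 ∩ s⁻¹(Vᵢ) ∩ H ⊆ Hᵢ` for `i = 1, 2`.
Then `H` is open in `G`. -/
theorem stmt_5 {G X : Type*} [TopologicalSpace G] [TopologicalSpace X]
    [LocallyCompactSpace G] [T2Space G] [T2Space X]
    (s r : G → X) (u : X → G) (i : G → G)
    (hs : Continuous s) (hr : Continuous r) (hu : Continuous u) (hi : Continuous i)
    (hsu : s ∘ u = id) (hru : r ∘ u = id) (hii : i ∘ i = id)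
    (hsi : s ∘ i = r) (hiu : i ∘ u = u)
    (H : Set G)
    (hdec : ∀ 𝔯 : Set G, IsGOrder s u i 𝔯 →
      ∃ V₁ V₂ : Set X, IsOpen V₁ ∧ IsOpen V₂ ∧ s '' H ⊆ V₁ ∪ V₂ ∧
        ∃ H₁ H₂ : Set G, IsOpen H₁ ∧ IsOpen H₂ ∧ H₁ ∪ H₂ ⊆ H ∧
          𝔯 ∩ s ⁻¹' V₁ ∩ H ⊆ H₁ ∧ 𝔯 ∩ s ⁻¹' V₂ ∩ H ⊆ H₂) :
    IsOpen H := by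
  rw [isOpen_iff_forall_mem_open]
  intro g hg
  -- the finite `G`-order generated by `g`
  set A : Set G := {g, i g} with hA
  set 𝔯 : Set G := A ∪ u '' (s '' A) with h𝔯
  have hAfin : A.Finite := (Set.finite_singleton (i g)).insert g
  have hfin : 𝔯.Finite := hAfin.union ((hAfin.image s).image u)
  have hiA : i '' A = A := by
    have h1 : i (i g) = g := congrFun hii g
    simp only [hA, Set.image_insert_eq, Set.image_singleton, h1]
    exact Set.pair_comm _ _
  have hsuA : s '' (u '' (s '' A)) = s '' A := by
    rw [← Set.image_comp, hsu, Set.image_id]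
  have horder : IsGOrder s u i 𝔯 := by
    refine ⟨?_, ?_, ?_⟩
    · rw [h𝔯, Set.image_union, hsuA, Set.union_self]
      exact Set.subset_union_right
    · rw [h𝔯, Set.image_union, hiA, ← Set.image_comp, hiu]
    · intro Z _
      exact (hfin.subset Set.inter_subset_left).isCompact
  obtain ⟨V₁, V₂, hV₁, hV₂, hsH, H₁, H₂, hH₁, hH₂, hsub, hc₁, hc₂⟩ := hdec 𝔯 horder
  have hg𝔯 : g ∈ 𝔯 := Or.inl (by simp [hA])
  have hsg : s g ∈ V₁ ∪ V₂ := hsH ⟨g, hg, rfl⟩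
  rcases hsg with h | h
  · exact ⟨H₁, fun x hx => hsub (Or.inl hx), hH₁, hc₁ ⟨⟨hg𝔯, h⟩, hg⟩⟩
  · exact ⟨H₂, fun x hx => hsub (Or.inr hx), hH₂, hc₂ ⟨⟨hg𝔯, h⟩, hg⟩⟩
end

section
/- Let (G, X, s, r, u, i) be a groupoid order datum with G locally compact Hausdorff and X Hausdorff. Let Y ⊆ X and let H be a subset of G with H ⊆ s⁻¹(Y). Assume that for every G-order 𝔯 there exist: subsets V₁, V₂ of Y, open in the subspace Y, with Y = V₁ ∪ V₂; continuous functions φ₁, φ₂ : Y → [0,1] with φ₁ + φ₂ = 1 on Y and with the support of φᵢ (the closure in Y of {y ∈ Y : φᵢ(y) ≠ 0}) contained in Vᵢ; and subsets H₁, H₂ of H, open in G, with 𝔯 ∩ s⁻¹(Vᵢ) ∩ H ⊆ Hᵢ for i = 1, 2, such that moreover K' ∩ Hᵢ is compact for every compact subset K' of G contained in s⁻¹(Vᵢ). Then K ∩ H is compact for every compact subset K of G contained in s⁻¹(Y). -/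
/-- Let `(G, X, s, r, u, i)` be a groupoid order datum with `G` locally
compact Hausdorff and `X` Hausdorff, let `Y ⊆ X` and `H ⊆ s⁻¹(Y)`. Assume that for every
`G`-order `𝔯` there exist: subsets `V₁, V₂` of `Y`, open in the subspace `Y`, with
`Y = V₁ ∪ V₂`; a continuous partition of unity `φ₁, φ₂ : Y → [0,1]` with the support of
`φᵢ` (closure taken in `Y`) contained in `Vᵢ`; and subsets `H₁, H₂` of `H`, open in `G`,
with `𝔯 ∩ s⁻¹(Vᵢ) ∩ H ⊆ Hᵢ`, such that moreover `K' ∩ Hᵢ` is compact for every compact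
`K' ⊆ s⁻¹(Vᵢ)`. Then `K ∩ H` is compact for every compact subset `K ⊆ s⁻¹(Y)`. -/
theorem stmt_6 {G X : Type*} [TopologicalSpace G] [TopologicalSpace X]
    [LocallyCompactSpace G] [T2Space G] [T2Space X]
    (s r : G → X) (u : X → G) (i : G → G)
    (hs : Continuous s) (hr : Continuous r) (hu : Continuous u) (hi : Continuous i)
    (hsu : s ∘ u = id) (hru : r ∘ u = id) (hii : i ∘ i = id)
    (hsi : s ∘ i = r) (hiu : i ∘ u = u)
    (Y : Set X) (H : Set G) (hHY : H ⊆ s ⁻¹' Y)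
    (hdec : ∀ 𝔯 : Set G, IsGOrder s u i 𝔯 →
      ∃ V₁ V₂ : Set X, V₁ ⊆ Y ∧ V₂ ⊆ Y ∧
        IsOpen (Subtype.val ⁻¹' V₁ : Set Y) ∧ IsOpen (Subtype.val ⁻¹' V₂ : Set Y) ∧
        Y = V₁ ∪ V₂ ∧
        (∃ φ₁ φ₂ : Y → ℝ, Continuous φ₁ ∧ Continuous φ₂ ∧
          (∀ y : Y, φ₁ y ∈ Set.Icc (0:ℝ) 1) ∧ (∀ y : Y, φ₂ y ∈ Set.Icc (0:ℝ) 1) ∧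
          (∀ y : Y, φ₁ y + φ₂ y = 1) ∧
          closure {y : Y | φ₁ y ≠ 0} ⊆ (Subtype.val ⁻¹' V₁ : Set Y) ∧
          closure {y : Y | φ₂ y ≠ 0} ⊆ (Subtype.val ⁻¹' V₂ : Set Y)) ∧
        ∃ H₁ H₂ : Set G, H₁ ⊆ H ∧ H₂ ⊆ H ∧ IsOpen H₁ ∧ IsOpen H₂ ∧
          𝔯 ∩ s ⁻¹' V₁ ∩ H ⊆ H₁ ∧ 𝔯 ∩ s ⁻¹' V₂ ∩ H ⊆ H₂ ∧
          (∀ K' : Set G, K' ⊆ s ⁻¹' V₁ → IsCompact K' → IsCompact (K' ∩ H₁)) ∧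
          (∀ K' : Set G, K' ⊆ s ⁻¹' V₂ → IsCompact K' → IsCompact (K' ∩ H₂))) :
    ∀ K : Set G, K ⊆ s ⁻¹' Y → IsCompact K → IsCompact (K ∩ H) := by
  intro K hKY hK
  -- Build a G-order from K
  set 𝔯 : Set G := K ∪ i '' K ∪ u '' (s '' K) ∪ u '' (r '' K) with h𝔯
  have h𝔯comp : IsCompact 𝔯 :=
    (((hK.union (hK.image hi)).union ((hK.image hs).image hu)).union
      ((hK.image hr).image hu))
  have horder : IsGOrder s u i 𝔯 := by
    refine ⟨?_, ?_, ?_⟩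
    · rintro g ⟨x, ⟨g', hg', rfl⟩, rfl⟩
      rcases hg' with ((hg' | ⟨k, hk, rfl⟩) | ⟨x', ⟨k, hk, rfl⟩, rfl⟩) | ⟨x', ⟨k, hk, rfl⟩, rfl⟩
      · exact Or.inl (Or.inr ⟨s g', ⟨g', hg', rfl⟩, rfl⟩)
      · have : s (i k) = r k := congrFun hsi k
        rw [this]
        exact Or.inr ⟨r k, ⟨k, hk, rfl⟩, rfl⟩
      · have : s (u (s k)) = s k := congrFun hsu (s k)
        rw [this]
        exact Or.inl (Or.inr ⟨s k, ⟨k, hk, rfl⟩, rfl⟩)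
      · have : s (u (r k)) = r k := congrFun hsu (r k)
        rw [this]
        exact Or.inr ⟨r k, ⟨k, hk, rfl⟩, rfl⟩
    · have hiuK : ∀ A : Set X, i '' (u '' A) = u '' A := by
        intro A
        rw [← Set.image_comp, hiu]
      have hiiK : i '' (i '' K) = K := by
        rw [← Set.image_comp, hii, Set.image_id]
      rw [h𝔯]
      rw [Set.image_union, Set.image_union, Set.image_union, hiiK, hiuK, hiuK]
      ext g
      constructor
      · rintro (((h | h) | h) | h)
        · exact Or.inl (Or.inl (Or.inr h))
        · exact Or.inl (Or.inl (Or.inl h))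
        · exact Or.inl (Or.inr h)
        · exact Or.inr h
      · rintro (((h | h) | h) | h)
        · exact Or.inl (Or.inl (Or.inr h))
        · exact Or.inl (Or.inl (Or.inl h))
        · exact Or.inl (Or.inr h)
        · exact Or.inr h
    · intro Z hZ
      exact h𝔯comp.inter_right (hZ.isClosed.preimage hs)
  obtain ⟨V₁, V₂, hV₁Y, hV₂Y, hV₁open, hV₂open, hYcover,
    ⟨φ₁, φ₂, hφ₁c, hφ₂c, hφ₁01, hφ₂01, hφsum, hsupp₁, hsupp₂⟩,
    H₁, H₂, hH₁H, hH₂H, hH₁open, hH₂open, hrH₁, hrH₂, hcomp₁, hcomp₂⟩ := hdec 𝔯 horder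
  -- the map from s⁻¹(Y) to Y
  let c : (s ⁻¹' Y : Set G) → Y := fun g => ⟨s g.1, g.2⟩
  have hc : Continuous c := Continuous.subtype_mk (hs.comp continuous_subtype_val) _
  -- preimage of K in the subtype is compact
  have hK' : IsCompact (Subtype.val ⁻¹' K : Set (s ⁻¹' Y : Set G)) := by
    rw [Subtype.isCompact_iff]
    have : Subtype.val '' (Subtype.val ⁻¹' K : Set (s ⁻¹' Y : Set G)) = K := by
      rw [Subtype.image_preimage_coe]
      exact Set.inter_eq_right.mpr hKY
    rw [this]; exact hK
  -- the pieces
  let T₁ : Set (s ⁻¹' Y : Set G) := Subtype.val ⁻¹' K ∩ (fun g => φ₁ (c g)) ⁻¹' Set.Ici (1/2 : ℝ)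
  let T₂ : Set (s ⁻¹' Y : Set G) := Subtype.val ⁻¹' K ∩ (fun g => φ₂ (c g)) ⁻¹' Set.Ici (1/2 : ℝ)
  have hT₁ : IsCompact T₁ :=
    hK'.inter_right (isClosed_Ici.preimage ((hφ₁c.comp hc)))
  have hT₂ : IsCompact T₂ :=
    hK'.inter_right (isClosed_Ici.preimage ((hφ₂c.comp hc)))
  let K₁ : Set G := Subtype.val '' T₁
  let K₂ : Set G := Subtype.val '' T₂
  have hK₁ : IsCompact K₁ := hT₁.image continuous_subtype_val
  have hK₂ : IsCompact K₂ := hT₂.image continuous_subtype_val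
  have hK₁K : K₁ ⊆ K := by rintro g ⟨x, ⟨hx, _⟩, rfl⟩; exact hx
  have hK₂K : K₂ ⊆ K := by rintro g ⟨x, ⟨hx, _⟩, rfl⟩; exact hx
  have hK₁V : K₁ ⊆ s ⁻¹' V₁ := by
    rintro g ⟨x, ⟨_, hx2⟩, rfl⟩
    have h0 : φ₁ (c x) ≠ 0 := by
      have : (1/2 : ℝ) ≤ φ₁ (c x) := hx2
      linarith
    have : c x ∈ closure {y : Y | φ₁ y ≠ 0} := subset_closure h0
    exact hsupp₁ this
  have hK₂V : K₂ ⊆ s ⁻¹' V₂ := by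
    rintro g ⟨x, ⟨_, hx2⟩, rfl⟩
    have h0 : φ₂ (c x) ≠ 0 := by
      have : (1/2 : ℝ) ≤ φ₂ (c x) := hx2
      linarith
    have : c x ∈ closure {y : Y | φ₂ y ≠ 0} := subset_closure h0
    exact hsupp₂ this
  have hKcover : K ⊆ K₁ ∪ K₂ := by
    intro g hg
    have hgY : s g ∈ Y := hKY hg
    set x : (s ⁻¹' Y : Set G) := ⟨g, hgY⟩ with hx
    have hsum := hφsum (c x)
    rcases le_or_gt (1/2 : ℝ) (φ₁ (c x)) with h | h
    · exact Or.inl ⟨x, ⟨hg, h⟩, rfl⟩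
    · have : (1/2 : ℝ) ≤ φ₂ (c x) := by linarith
      exact Or.inr ⟨x, ⟨hg, this⟩, rfl⟩
  have hK𝔯 : K ⊆ 𝔯 := fun g hg => Or.inl (Or.inl (Or.inl hg))
  -- the key identity
  have key : K ∩ H = (K₁ ∩ H₁) ∪ (K₂ ∩ H₂) := by
    ext g
    constructor
    · rintro ⟨hgK, hgH⟩
      rcases hKcover hgK with h | h
      · exact Or.inl ⟨h, hrH₁ ⟨⟨hK𝔯 hgK, hK₁V h⟩, hgH⟩⟩
      · exact Or.inr ⟨h, hrH₂ ⟨⟨hK𝔯 hgK, hK₂V h⟩, hgH⟩⟩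
    · rintro (⟨h1, h2⟩ | ⟨h1, h2⟩)
      · exact ⟨hK₁K h1, hH₁H h2⟩
      · exact ⟨hK₂K h1, hH₂H h2⟩
  rw [key]
  exact (hcomp₁ K₁ hK₁V hK₁).union (hcomp₂ K₂ hK₂V hK₂)
end

section
/- Let ℰ be a coarse structure, A a unital ℰ-filtered C*-algebra, 0 < ε < 1/12, and E ∈ ℰ. Let u and v be ε-E-unitaries in A. Then there is a continuous path (w_t)_{t∈[0,1]} in M₂(A) with w₀ = diag(u, v) and w₁ = diag(uv, 1), such that for every t ∈ [0,1], all entries of w_t lie in A_{E+E} and ‖w_t* w_t − 1‖ < 3ε and ‖w_t w_t* − 1‖ < 3ε; that is, diag(u, v) and diag(uv, 1) are homotopic as 3ε-2E-unitaries in M₂(A). -/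
/-- The (unique) C*-norm of a square matrix over a C*-algebra `A`: the operator norm of
the matrix acting on the Hilbert `A`-module `Aⁿ`. -/
noncomputable def matCNorm {A : Type*} [CStarAlgebra A] {n : ℕ}
    (x : Matrix (Fin n) (Fin n) A) : ℝ :=
  sSup {t : ℝ | ∃ v : Fin n → A, ‖∑ j, star (v j) * v j‖ ≤ 1 ∧
    t = Real.sqrt ‖∑ j, star (x.mulVec v j) * x.mulVec v j‖}

/-- An `ℰ`-filtered (unital) C*-algebra structure on `A`: a family of closed linear
subspaces `F E`, monotone in `E`, stable under the involution, satisfying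
`F E * F E' ⊆ F (E + E')`, with dense union, and with `1 ∈ F E` for all `E`. -/
structure CoarseFiltration (ℰ : Type*) [AddCommSemigroup ℰ] [Lattice ℰ]
    (A : Type*) [CStarAlgebra A] where
  F : ℰ → Submodule ℂ A
  closed : ∀ E, IsClosed (F E : Set A)
  mono : ∀ ⦃E E' : ℰ⦄, E ≤ E' → F E ≤ F E'
  star_mem : ∀ E : ℰ, ∀ a ∈ F E, star a ∈ F E
  mul_mem : ∀ E E' : ℰ, ∀ a b : A, a ∈ F E → b ∈ F E' → a * b ∈ F (E + E')
  dense_union : Dense (⋃ E : ℰ, (F E : Set A))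
  one_mem : ∀ E : ℰ, (1 : A) ∈ F E

/-! With `D a = diag(a, 1)` and `R θ` the rotation by `θ` (real scalars), the path
`D u * (R θ * D v * (R θ)⋆)`, `θ` running from `π/2` to `0`, joins `diag(u, v)` to
`diag(uv, 1)`. Conjugating by a unitary and passing from `a` to `D a` preserve
`ε`-unitarity, and since `‖b‖² < 1 + ε` the product of two `ε`-unitaries is a
`(2 + ε)ε`-unitary. Each entry of the path is a sum of products of an entry of `D u` with a
real combination of entries of `D v`, hence lies in `A_{E+E}`. The norm `matCNorm` is the
norm of Mathlib's C⋆-algebra `CStarMatrix`. -/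

open scoped WithCStarModule Matrix
open Real

section AlmostUnitary

variable {B : Type*} [NormedRing B] [StarRing B]

def IsAlmostUnitary (ε : ℝ) (b : B) : Prop :=
  ‖star b * b - 1‖ < ε ∧ ‖b * star b - 1‖ < ε

variable [CStarRing B]

lemma CStarRing.norm_one_le_one : ‖(1 : B)‖ ≤ 1 := by
  have h : ‖(1 : B)‖ = ‖(1 : B)‖ * ‖(1 : B)‖ := by
    simpa using CStarRing.norm_star_mul_self (x := (1 : B))
  nlinarith [norm_nonneg (1 : B)]

lemma norm_mul_self_lt_of_norm_star_mul_self_sub_one_lt {ε : ℝ} {b : B}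
    (hb : ‖star b * b - 1‖ < ε) : ‖b‖ * ‖b‖ < 1 + ε :=
  calc ‖b‖ * ‖b‖ = ‖(star b * b - 1) + 1‖ := by rw [sub_add_cancel, CStarRing.norm_star_mul_self]
    _ ≤ ‖star b * b - 1‖ + ‖(1 : B)‖ := norm_add_le _ _
    _ < ε + 1 := add_lt_add_of_lt_of_le hb CStarRing.norm_one_le_one
    _ = 1 + ε := add_comm _ _

lemma norm_star_mul_mul_sub_one_lt {ε : ℝ} (hε : ε < 1) {a b : B}
    (ha : ‖star a * a - 1‖ < ε) (hb : ‖star b * b - 1‖ < ε) :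
    ‖star (a * b) * (a * b) - 1‖ < 3 * ε := by
  have hε0 : 0 < ε := (norm_nonneg _).trans_lt ha
  have hb' := norm_mul_self_lt_of_norm_star_mul_self_sub_one_lt hb
  have key : star (a * b) * (a * b) - 1 = star b * (star a * a - 1) * b + (star b * b - 1) := by
    rw [star_mul]; noncomm_ring
  calc ‖star (a * b) * (a * b) - 1‖
      ≤ ‖star b‖ * ‖star a * a - 1‖ * ‖b‖ + ‖star b * b - 1‖ := by
        rw [key]
        exact (norm_add_le _ _).trans (add_le_add_left (norm_mul₃_le ..) _)
    _ = (‖b‖ * ‖b‖) * ‖star a * a - 1‖ + ‖star b * b - 1‖ := by rw [norm_star]; ring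
    _ < 3 * ε := by nlinarith [norm_nonneg (star a * a - 1)]

lemma IsAlmostUnitary.mul {ε : ℝ} (hε : ε < 1) {a b : B} (ha : IsAlmostUnitary ε a)
    (hb : IsAlmostUnitary ε b) : IsAlmostUnitary (3 * ε) (a * b) := by
  refine ⟨norm_star_mul_mul_sub_one_lt hε ha.1 hb.1, ?_⟩
  simpa [star_mul, mul_assoc] using norm_star_mul_mul_sub_one_lt hε (a := star b) (b := star a)
    (by simpa using hb.2) (by simpa using ha.2)

lemma IsAlmostUnitary.unitary_conj {ε : ℝ} {b : B} (hb : IsAlmostUnitary ε b) {r : B}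
    (hr : r ∈ unitary B) : IsAlmostUnitary ε (r * b * star r) := by
  have conj : ∀ x : B, ‖r * x * star r‖ = ‖x‖ := fun x => by
    rw [CStarRing.norm_mul_mem_unitary _ (Unitary.star_mem hr), CStarRing.norm_mem_unitary_mul _ hr]
  have hrr : star r * r = 1 := Unitary.star_mul_self_of_mem hr
  have hrr' : r * star r = 1 := Unitary.mul_star_self_of_mem hr
  constructor
  · calc ‖star (r * b * star r) * (r * b * star r) - 1‖
        = ‖r * star b * (star r * r) * b * star r - r * star r‖ := by
          rw [hrr']; simp only [star_mul, star_star]; noncomm_ring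
      _ = ‖r * (star b * b - 1) * star r‖ := by rw [hrr]; noncomm_ring
      _ < ε := (conj _).trans_lt hb.1
  · calc ‖r * b * star r * star (r * b * star r) - 1‖
        = ‖r * b * (star r * r) * star b * star r - r * star r‖ := by
          rw [hrr']; simp only [star_mul, star_star]; noncomm_ring
      _ = ‖r * (b * star b - 1) * star r‖ := by rw [hrr]; noncomm_ring
      _ < ε := (conj _).trans_lt hb.2

end AlmostUnitary

noncomputable def rotationMatrix (θ : ℝ) : Matrix (Fin 2) (Fin 2) ℝ :=
  !![cos θ, -sin θ; sin θ, cos θ]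

lemma rotationMatrix_mem_unitary (θ : ℝ) :
    rotationMatrix θ ∈ unitary (Matrix (Fin 2) (Fin 2) ℝ) := by
  rw [Unitary.mem_iff]
  constructor <;>
  · ext i j
    fin_cases i <;> fin_cases j <;>
      simp only [rotationMatrix, Matrix.mul_apply, Matrix.star_apply, Matrix.of_apply,
        Matrix.cons_val', Matrix.cons_val_zero, Matrix.cons_val_one, Matrix.cons_val_fin_one,
        Fin.isValue, Fin.zero_eta, Fin.mk_one, star_trivial, Fin.sum_univ_two, Matrix.one_apply_eq,
        Matrix.one_apply_ne, ne_eq, zero_ne_one, one_ne_zero, not_false_eq_true] <;>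
      nlinarith [sin_sq_add_cos_sq θ]

section CStarMatrix

attribute [local instance] CStarAlgebra.spectralOrder CStarAlgebra.spectralOrderedRing

open CStarMatrix

variable {A : Type*} [CStarAlgebra A]

/- `CStarMatrix` acts on row vectors by `vecMul`, in the Hilbert module with
`⟪x, y⟫ = ∑ i, y i * star (x i)`; entrywise `star` turns the action of `x` on columns,
which `matCNorm` measures, into the action of `xᴴ` on rows. -/
theorem matCNorm_eq_norm {n : ℕ} (x : Matrix (Fin n) (Fin n) A) :
    matCNorm x = ‖ofMatrix x‖ := by
  let φ : (Fin n → A) → C⋆ᵐᵒᵈ(A, Fin n → A) := fun v => (WithCStarModule.equiv A _).symm (star v)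
  have hφ : ∀ v, ‖φ v‖ = √‖∑ j, star (v j) * v j‖ := fun v => by
    simp [φ, WithCStarModule.pi_norm, WithCStarModule.inner_def]
  have hx : ∀ v, toCLM (ofMatrix xᴴ) (φ v) = φ (x *ᵥ v) := fun v => by
    simp only [φ, toCLM_apply, Matrix.star_mulVec]; rfl
  have hset : {t : ℝ | ∃ v : Fin n → A, ‖∑ j, star (v j) * v j‖ ≤ 1 ∧
      t = √‖∑ j, star (x.mulVec v j) * x.mulVec v j‖} =
      (fun w => ‖toCLM (ofMatrix xᴴ) w‖) '' Metric.closedBall 0 1 := by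
    ext t
    simp only [Set.mem_ofPred_eq, Set.mem_image, mem_closedBall_zero_iff]
    constructor
    · rintro ⟨v, hv, rfl⟩
      exact ⟨φ v, by rwa [hφ, Real.sqrt_le_one], by rw [hx, hφ]⟩
    · rintro ⟨w, hw, rfl⟩
      have hw' : φ (star (WithCStarModule.equiv A _ w)) = w := by simp [φ]
      refine ⟨star (WithCStarModule.equiv A _ w), ?_, ?_⟩
      · rwa [← Real.sqrt_le_one, ← hφ, hw']
      · rw [← hφ, ← hx, hw']
  rw [matCNorm, hset, ContinuousLinearMap.sSup_unitClosedBall_eq_norm, ← norm_def]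
  exact norm_star (ofMatrix x)

def cornerEmbedding : A →⋆ₙₐ[ℂ] CStarMatrix (Fin 2) (Fin 2) A where
  toFun a := ofMatrix !![a, 0; 0, 0]
  map_smul' c a := by ext i j; fin_cases i <;> fin_cases j <;> simp
  map_zero' := by ext i j; fin_cases i <;> fin_cases j <;> simp
  map_add' a b := by ext i j; fin_cases i <;> fin_cases j <;> simp
  map_mul' a b := by ext i j; fin_cases i <;> fin_cases j <;> simp [mul_apply]
  map_star' a := by ext i j; fin_cases i <;> fin_cases j <;> simp [star_apply]

lemma isAlmostUnitary_diag_one {ε : ℝ} {u : A} (hu : IsAlmostUnitary ε u) :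
    IsAlmostUnitary ε (ofMatrix !![u, 0; 0, 1] : CStarMatrix (Fin 2) (Fin 2) A) := by
  have h₁ : star (ofMatrix !![u, 0; 0, 1]) * ofMatrix !![u, 0; 0, 1] - 1 =
      cornerEmbedding (star u * u - 1) := by
    ext i j
    fin_cases i <;> fin_cases j <;> simp [mul_apply, star_apply, cornerEmbedding, one_apply]
  have h₂ : ofMatrix !![u, 0; 0, 1] * star (ofMatrix !![u, 0; 0, 1]) - 1 =
      cornerEmbedding (u * star u - 1) := by
    ext i j
    fin_cases i <;> fin_cases j <;> simp [mul_apply, star_apply, cornerEmbedding, one_apply]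
  rw [IsAlmostUnitary, h₁, h₂]
  exact ⟨(NonUnitalStarAlgHom.norm_apply_le _ _).trans_lt hu.1,
    (NonUnitalStarAlgHom.norm_apply_le _ _).trans_lt hu.2⟩

lemma star_ofMatrix_map_algebraMap {n : Type*} [Fintype n] (N : Matrix n n ℝ) :
    star (ofMatrix (N.map (algebraMap ℝ A))) = ofMatrix ((star N).map (algebraMap ℝ A)) :=
  (Matrix.conjTranspose_map (algebraMap ℝ A) algebraMap_star_comm).symm

lemma ofMatrix_map_algebraMap_mem_unitary {n : Type*} [Fintype n] [DecidableEq n]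
    {N : Matrix n n ℝ} (hN : N ∈ unitary (Matrix n n ℝ)) :
    ofMatrix (N.map (algebraMap ℝ A)) ∈ unitary (CStarMatrix n n A) := by
  rw [Unitary.mem_iff] at hN ⊢
  rw [star_ofMatrix_map_algebraMap]
  constructor
  · change (star N).map (algebraMap ℝ A) * N.map (algebraMap ℝ A) = 1
    rw [← Matrix.map_mul, hN.1, Matrix.map_one _ (map_zero _) (map_one _)]
  · change N.map (algebraMap ℝ A) * (star N).map (algebraMap ℝ A) = 1
    rw [← Matrix.map_mul, hN.2, Matrix.map_one _ (map_zero _) (map_one _)]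

noncomputable def rotationCStarMatrix (θ : ℝ) : CStarMatrix (Fin 2) (Fin 2) A :=
  ofMatrix ((rotationMatrix θ).map (algebraMap ℝ A))

noncomputable def rotationHomotopy (u v : A) (t : ℝ) : CStarMatrix (Fin 2) (Fin 2) A :=
  let R := rotationCStarMatrix (π / 2 * (1 - t))
  ofMatrix !![u, 0; 0, 1] * (R * ofMatrix !![v, 0; 0, 1] * star R)

lemma rotationHomotopy_zero (u v : A) : rotationHomotopy u v 0 = ofMatrix !![u, 0; 0, v] := by
  simp only [rotationHomotopy, rotationCStarMatrix, star_ofMatrix_map_algebraMap, sub_zero,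
    mul_one]
  ext i j
  fin_cases i <;> fin_cases j <;> simp [mul_apply, rotationMatrix]

lemma rotationHomotopy_one (u v : A) :
    rotationHomotopy u v 1 = ofMatrix !![u * v, 0; 0, 1] := by
  simp only [rotationHomotopy, rotationCStarMatrix, star_ofMatrix_map_algebraMap, sub_self,
    mul_zero]
  ext i j
  fin_cases i <;> fin_cases j <;> simp [mul_apply, rotationMatrix]

lemma continuous_rotationHomotopy (u v : A) : Continuous (rotationHomotopy u v) := by
  have hR : Continuous fun θ : ℝ => (rotationCStarMatrix θ : CStarMatrix (Fin 2) (Fin 2) A) := by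
    refine Continuous.matrix_map (f := algebraMap ℝ A) ?_ (continuous_algebraMap ℝ A)
    refine continuous_matrix fun i j => ?_
    fin_cases i <;> fin_cases j <;>
      simp only [rotationMatrix, Matrix.of_apply, Matrix.cons_val', Matrix.cons_val_zero,
        Matrix.cons_val_one, Matrix.cons_val_fin_one, Fin.isValue, Fin.zero_eta, Fin.mk_one] <;>
      fun_prop
  have hRt := hR.comp (show Continuous fun t : ℝ => π / 2 * (1 - t) by fun_prop)
  exact continuous_const.mul ((hRt.mul continuous_const).mul hRt.star)

lemma isAlmostUnitary_rotationHomotopy {ε : ℝ} (hε : ε < 1) {u v : A}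
    (hu : IsAlmostUnitary ε u) (hv : IsAlmostUnitary ε v) (t : ℝ) :
    IsAlmostUnitary (3 * ε) (rotationHomotopy u v t) :=
  (isAlmostUnitary_diag_one hu).mul hε <| (isAlmostUnitary_diag_one hv).unitary_conj <|
    ofMatrix_map_algebraMap_mem_unitary (rotationMatrix_mem_unitary _)

end CStarMatrix

section Filtration

variable {A : Type*} [CStarAlgebra A]

lemma Matrix.mul_map_algebraMap_apply_mem {n : Type*} [Fintype n] {S : Submodule ℂ A}
    {M : Matrix n n A} (hM : ∀ i j, M i j ∈ S) (N : Matrix n n ℝ) (i j : n) :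
    (M * N.map (algebraMap ℝ A)) i j ∈ S := by
  rw [Matrix.mul_apply]
  refine Submodule.sum_mem _ fun k _ => ?_
  rw [Matrix.map_apply, ← Algebra.commutes, ← Algebra.smul_def]
  exact Submodule.smul_of_tower_mem _ _ (hM i k)

lemma Matrix.map_algebraMap_mul_apply_mem {n : Type*} [Fintype n] {S : Submodule ℂ A}
    {M : Matrix n n A} (hM : ∀ i j, M i j ∈ S) (N : Matrix n n ℝ) (i j : n) :
    (N.map (algebraMap ℝ A) * M) i j ∈ S := by
  rw [Matrix.mul_apply]
  refine Submodule.sum_mem _ fun k _ => ?_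
  rw [Matrix.map_apply, ← Algebra.smul_def]
  exact Submodule.smul_of_tower_mem _ _ (hM k j)

namespace CoarseFiltration

variable {ℰ : Type*} [AddCommSemigroup ℰ] [Lattice ℰ] (Φ : CoarseFiltration ℰ A)

lemma matrix_mul_apply_mem {n : Type*} [Fintype n] {E E' : ℰ} {M N : Matrix n n A}
    (hM : ∀ i j, M i j ∈ Φ.F E) (hN : ∀ i j, N i j ∈ Φ.F E') (i j : n) :
    (M * N) i j ∈ Φ.F (E + E') :=
  Submodule.sum_mem _ fun k _ => Φ.mul_mem E E' _ _ (hM i k) (hN k j)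

lemma diag_one_apply_mem {E : ℰ} {u : A} (hu : u ∈ Φ.F E) (i j : Fin 2) :
    !![u, 0; 0, 1] i j ∈ Φ.F E := by
  fin_cases i <;> fin_cases j
  exacts [hu, zero_mem _, zero_mem _, Φ.one_mem E]

lemma rotationHomotopy_apply_mem {E : ℰ} {u v : A} (hu : u ∈ Φ.F E) (hv : v ∈ Φ.F E)
    (t : ℝ) (i j : Fin 2) : rotationHomotopy u v t i j ∈ Φ.F (E + E) := by
  simp only [rotationHomotopy, rotationCStarMatrix, star_ofMatrix_map_algebraMap]
  exact Φ.matrix_mul_apply_mem (Φ.diag_one_apply_mem hu)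
    (Matrix.mul_map_algebraMap_apply_mem
      (Matrix.map_algebraMap_mul_apply_mem (Φ.diag_one_apply_mem hv) _) _) i j

end CoarseFiltration

end Filtration

theorem stmt_7_general {ℰ : Type*} [AddCommSemigroup ℰ] [Lattice ℰ]
    {A : Type*} [CStarAlgebra A] (Φ : CoarseFiltration ℰ A)
    (ε : ℝ) (hε : ε < 1 / 12) (E : ℰ)
    (u v : A)
    (huF : u ∈ Φ.F E) (hu1 : ‖star u * u - 1‖ < ε) (hu2 : ‖u * star u - 1‖ < ε)
    (hvF : v ∈ Φ.F E) (hv1 : ‖star v * v - 1‖ < ε) (hv2 : ‖v * star v - 1‖ < ε) :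
    ∃ w : ℝ → Matrix (Fin 2) (Fin 2) A,
      ContinuousOn w (Set.Icc 0 1) ∧
      w 0 = !![u, 0; 0, v] ∧ w 1 = !![u * v, 0; 0, 1] ∧
      ∀ t ∈ Set.Icc (0 : ℝ) 1,
        (∀ i j, w t i j ∈ Φ.F (E + E)) ∧
        matCNorm (star (w t) * w t - 1) < 3 * ε ∧
        matCNorm (w t * star (w t) - 1) < 3 * ε := by
  refine ⟨rotationHomotopy u v, (continuous_rotationHomotopy u v).continuousOn,
    rotationHomotopy_zero u v, rotationHomotopy_one u v, fun t _ => ?_⟩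
  obtain ⟨hstar_mul, hmul_star⟩ :=
    isAlmostUnitary_rotationHomotopy (by linarith) ⟨hu1, hu2⟩ ⟨hv1, hv2⟩ t
  exact ⟨Φ.rotationHomotopy_apply_mem huF hvF t, by rwa [matCNorm_eq_norm],
    by rwa [matCNorm_eq_norm]⟩

/-- Let `ℰ` be a coarse structure (a lattice-ordered abelian semigroup
with monotone addition), `A` a unital `ℰ`-filtered C*-algebra, `0 < ε < 1/12` and
`E ∈ ℰ`. If `u` and `v` are `ε`-`E`-unitaries in `A`, then `diag(u, v)` and
`diag(uv, 1)` are homotopic as `3ε`-`2E`-unitaries in `M₂(A)` (matrix algebras being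
equipped with their unique C*-norm `matCNorm`). -/
theorem stmt_7 {ℰ : Type*} [AddCommSemigroup ℰ] [Lattice ℰ]
    [CovariantClass ℰ ℰ (· + ·) (· ≤ ·)]
    [CovariantClass ℰ ℰ (Function.swap (· + ·)) (· ≤ ·)]
    {A : Type*} [CStarAlgebra A] (Φ : CoarseFiltration ℰ A)
    (ε : ℝ) (hε0 : 0 < ε) (hε : ε < 1 / 12) (E : ℰ)
    (u v : A)
    (huF : u ∈ Φ.F E) (hu1 : ‖star u * u - 1‖ < ε) (hu2 : ‖u * star u - 1‖ < ε)
    (hvF : v ∈ Φ.F E) (hv1 : ‖star v * v - 1‖ < ε) (hv2 : ‖v * star v - 1‖ < ε) :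
    ∃ w : ℝ → Matrix (Fin 2) (Fin 2) A,
      ContinuousOn w (Set.Icc 0 1) ∧
      w 0 = !![u, 0; 0, v] ∧ w 1 = !![u * v, 0; 0, 1] ∧
      ∀ t ∈ Set.Icc (0 : ℝ) 1,
        (∀ i j, w t i j ∈ Φ.F (E + E)) ∧
        matCNorm (star (w t) * w t - 1) < 3 * ε ∧
        matCNorm (w t * star (w t) - 1) < 3 * ε :=
  stmt_7_general Φ ε hε E u v huF hu1 hu2 hvF hv1 hv2
end
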